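/- arXiv:1207.1580 — 4 statements merged into one kernel-verified Lean document; each statement's English description precedes it below -/
import Mathlib

section
/- Let K ⊆ L ⊆ M be fields. Then M : K is radically solvable if and only if both M : L and L : K are radically solvable; likewise, M : K is quadratically solvable if and only if both M : L and L : K are quadratically solvable. -/
/-- The subfield generated by a subfield `K` and an element `x`. -/
def Subfield.adjoinEl {F : Type*} [Field F] (K : Subfield F) (x : F) : Subfield F :=
  Subfield.closure (↑K ∪ {x})

/-- `M` is a radical extension of `K`: there is a tower
`K = K₁ ⊆ K₂ ⊆ … ⊆ K_t = M` with `K_{i+1} = K_i(x_i)` and `x_i ^ n_i ∈ K_i`. -/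
def IsRadicalExtension {F : Type*} [Field F] (K M : Subfield F) : Prop :=
  ∃ t : ℕ, ∃ c : Fin (t + 1) → Subfield F,
    c 0 = K ∧ c (Fin.last t) = M ∧
    ∀ i : Fin t, ∃ x : F, ∃ n : ℕ, 0 < n ∧ x ^ n ∈ c i.castSucc ∧
      c i.succ = (c i.castSucc).adjoinEl x

/-- `M` is a quadratic extension of `K`: a radical extension with all `n_i = 2`. -/
def IsQuadraticExtension {F : Type*} [Field F] (K M : Subfield F) : Prop :=
  ∃ t : ℕ, ∃ c : Fin (t + 1) → Subfield F,
    c 0 = K ∧ c (Fin.last t) = M ∧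
    ∀ i : Fin t, ∃ x : F, x ^ 2 ∈ c i.castSucc ∧
      c i.succ = (c i.castSucc).adjoinEl x

/-- `L : K` is radically solvable if `L` is contained in a radical extension of `K`. -/
def RadicallySolvable {F : Type*} [Field F] (K L : Subfield F) : Prop :=
  ∃ M : Subfield F, L ≤ M ∧ IsRadicalExtension K M

/-- `L : K` is quadratically solvable if `L` is contained in a quadratic extension of `K`. -/
def QuadraticallySolvable {F : Type*} [Field F] (K L : Subfield F) : Prop :=
  ∃ M : Subfield F, L ≤ M ∧ IsQuadraticExtension K M

/-!
A tower of simple steps is a path in the relation "`B` arises from `A` by one step", so being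
contained in the top of such a tower over `K` is transitive along `K ≤ L ≤ M` as soon as steps
survive joining with a fixed field `C`: a tower `A ⟶ … ⟶ B` becomes `C ⊔ A ⟶ … ⟶ C ⊔ B`.
For `M : K`, joining a tower over `K` with `L` gives a tower over `L`; conversely, a tower over
`L` joined with the top `N` of a tower over `K` extends the latter.
-/

namespace Relation

variable {α : Type*} {r : α → α → Prop}

theorem reflTransGen_iff_exists_fin_chain {a b : α} :
    ReflTransGen r a b ↔ ∃ t : ℕ, ∃ c : Fin (t + 1) → α,
      c 0 = a ∧ c (Fin.last t) = b ∧ ∀ i : Fin t, r (c i.castSucc) (c i.succ) := by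
  constructor
  · intro h
    induction h with
    | refl => exact ⟨0, fun _ => a, rfl, rfl, fun i => i.elim0⟩
    | @tail d e _ hde ih =>
      obtain ⟨t, c, hc0, hcl, hstep⟩ := ih
      refine ⟨t + 1, Fin.snoc c e, by simpa using hc0, Fin.snoc_last _ _, fun i => ?_⟩
      induction i using Fin.lastCases with
      | last => simpa [hcl] using hde
      | cast j => rw [Fin.succ_castSucc, Fin.snoc_castSucc, Fin.snoc_castSucc]; exact hstep j
  · rintro ⟨t, c, rfl, rfl, hstep⟩
    have reach : ∀ i : Fin (t + 1), ReflTransGen r (c 0) (c i) := by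
      intro i
      induction i using Fin.induction with
      | zero => exact ReflTransGen.refl
      | succ j ih => exact ih.tail (hstep j)
    exact reach _

variable [SemilatticeSup α]

theorem exists_ge_reflTransGen_iff (hr : ∀ c a b, r a b → r (c ⊔ a) (c ⊔ b))
    {a b c : α} (hab : a ≤ b) (hbc : b ≤ c) :
    (∃ d, c ≤ d ∧ ReflTransGen r a d) ↔
      (∃ d, c ≤ d ∧ ReflTransGen r b d) ∧ (∃ d, b ≤ d ∧ ReflTransGen r a d) := by
  have join (e : α) {x y : α} (h : ReflTransGen r x y) : ReflTransGen r (e ⊔ x) (e ⊔ y) :=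
    h.lift (e ⊔ ·) (hr e)
  constructor
  · rintro ⟨d, hcd, had⟩
    refine ⟨⟨b ⊔ d, hcd.trans le_sup_right, ?_⟩, ⟨d, hbc.trans hcd, had⟩⟩
    simpa [sup_eq_left.2 hab] using join b had
  · rintro ⟨⟨d₁, hcd₁, hbd₁⟩, ⟨d₂, hbd₂, had₂⟩⟩
    refine ⟨d₂ ⊔ d₁, hcd₁.trans le_sup_right, had₂.trans ?_⟩
    simpa [sup_eq_left.2 hbd₂] using join d₂ hbd₁

end Relation

namespace Subfield

variable {F : Type*} [Field F]

theorem sup_adjoinEl (C A : Subfield F) (x : F) : C ⊔ A.adjoinEl x = (C ⊔ A).adjoinEl x := by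
  rw [adjoinEl, adjoinEl, closure_union, closure_union, closure_eq, closure_eq, sup_assoc]

def RadicalStep (A B : Subfield F) : Prop :=
  ∃ x : F, ∃ n : ℕ, 0 < n ∧ x ^ n ∈ A ∧ B = A.adjoinEl x

def QuadraticStep (A B : Subfield F) : Prop :=
  ∃ x : F, x ^ 2 ∈ A ∧ B = A.adjoinEl x

theorem RadicalStep.sup_left {A B : Subfield F} (C : Subfield F) (h : RadicalStep A B) :
    RadicalStep (C ⊔ A) (C ⊔ B) := by
  obtain ⟨x, n, hn, hx, rfl⟩ := h
  exact ⟨x, n, hn, le_sup_right (a := C) hx, sup_adjoinEl C A x⟩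

theorem QuadraticStep.sup_left {A B : Subfield F} (C : Subfield F) (h : QuadraticStep A B) :
    QuadraticStep (C ⊔ A) (C ⊔ B) := by
  obtain ⟨x, hx, rfl⟩ := h
  exact ⟨x, le_sup_right (a := C) hx, sup_adjoinEl C A x⟩

end Subfield

open Relation Subfield

section

variable {F : Type*} [Field F]

theorem radicallySolvable_iff_reflTransGen (K L : Subfield F) :
    RadicallySolvable K L ↔ ∃ N, L ≤ N ∧ ReflTransGen RadicalStep K N := by
  simp only [RadicallySolvable, IsRadicalExtension, reflTransGen_iff_exists_fin_chain,
    RadicalStep]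

theorem quadraticallySolvable_iff_reflTransGen (K L : Subfield F) :
    QuadraticallySolvable K L ↔ ∃ N, L ≤ N ∧ ReflTransGen QuadraticStep K N := by
  simp only [QuadraticallySolvable, IsQuadraticExtension, reflTransGen_iff_exists_fin_chain,
    QuadraticStep]

end

/-- Lemma: for fields `K ⊆ L ⊆ M`, the extension `M : K` is radically (respectively
quadratically) solvable iff both `M : L` and `L : K` are. -/
theorem statement0 {F : Type*} [Field F] (K L M : Subfield F)
    (hKL : K ≤ L) (hLM : L ≤ M) :
    (RadicallySolvable K M ↔ (RadicallySolvable L M ∧ RadicallySolvable K L)) ∧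
    (QuadraticallySolvable K M ↔ (QuadraticallySolvable L M ∧ QuadraticallySolvable K L)) := by
  simp only [radicallySolvable_iff_reflTransGen, quadraticallySolvable_iff_reflTransGen]
  exact ⟨exists_ge_reflTransGen_iff (fun C _ _ => RadicalStep.sup_left C) hKL hLM,
    exists_ge_reflTransGen_iff (fun C _ _ => QuadraticStep.sup_left C) hKL hLM⟩
end

section
/- Suppose X = (X₁,…,X_r), Y = (Y₁,…,Y_s) and Z = (Z₁,…,Z_t) are vectors of indeterminates, f = (f₁,…,f_m) ∈ ℚ[X,Y]^m and g = (g₁,…,g_n) ∈ ℚ[Y,Z]^n, and ℚ(X,Y,Z) is a finite extension of ℚ(f,g). Then ℚ(X,Y,Z) : ℚ(f,g) is radically (respectively quadratically) solvable if and only if both ℚ(f,Y,Z) : ℚ(f,g) and ℚ(X,Y) : ℚ(f,Y) are radically (respectively quadratically) solvable. -/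
noncomputable section

/-- `L : K` is a finite extension of subfields. -/
def FiniteExtS {F : Type*} [Field F] (K L : Subfield F) : Prop :=
  ∃ h : K ≤ L,
    @FiniteDimensional ↥K ↥L _ _
      (@Algebra.toModule _ _ _ _ ((Subfield.inclusion h).toAlgebra))

/-- `ℚ(X,Y,Z)`: the field of rational functions in the indeterminates
`X₁,…,X_r, Y₁,…,Y_s, Z₁,…,Z_t` over `ℚ`. -/
abbrev FracXYZ (r s t : ℕ) : Type := FractionRing (MvPolynomial (Fin r ⊕ (Fin s ⊕ Fin t)) ℚ)

def toFracXYZ (r s t : ℕ) : MvPolynomial (Fin r ⊕ (Fin s ⊕ Fin t)) ℚ →+* FracXYZ r s t :=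
  algebraMap _ _

/-- The indeterminate `X_i` in `ℚ(X,Y,Z)`. -/
def xVar (r s t : ℕ) (i : Fin r) : FracXYZ r s t :=
  toFracXYZ r s t (MvPolynomial.X (Sum.inl i))

/-- The indeterminate `Y_j` in `ℚ(X,Y,Z)`. -/
def yVar (r s t : ℕ) (j : Fin s) : FracXYZ r s t :=
  toFracXYZ r s t (MvPolynomial.X (Sum.inr (Sum.inl j)))

/-- The indeterminate `Z_k` in `ℚ(X,Y,Z)`. -/
def zVar (r s t : ℕ) (k : Fin t) : FracXYZ r s t :=
  toFracXYZ r s t (MvPolynomial.X (Sum.inr (Sum.inr k)))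

/-- The inclusion `ℚ[X,Y] → ℚ(X,Y,Z)`. -/
def liftXY (r s t : ℕ) : MvPolynomial (Fin r ⊕ Fin s) ℚ →+* FracXYZ r s t :=
  (toFracXYZ r s t).comp
    (MvPolynomial.rename (Sum.map (id : Fin r → Fin r)
      (Sum.inl : Fin s → Fin s ⊕ Fin t))).toRingHom

/-- The inclusion `ℚ[Y,Z] → ℚ(X,Y,Z)`. -/
def liftYZ (r s t : ℕ) : MvPolynomial (Fin s ⊕ Fin t) ℚ →+* FracXYZ r s t :=
  (toFracXYZ r s t).comp
    (MvPolynomial.rename (Sum.inr : Fin s ⊕ Fin t → Fin r ⊕ (Fin s ⊕ Fin t))).toRingHom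

/-- The subfield `ℚ(f,g)` of `ℚ(X,Y,Z)`. -/
def Qfg (r s t m n : ℕ) (f : Fin m → MvPolynomial (Fin r ⊕ Fin s) ℚ)
    (g : Fin n → MvPolynomial (Fin s ⊕ Fin t) ℚ) : Subfield (FracXYZ r s t) :=
  Subfield.closure
    (Set.range (fun i => liftXY r s t (f i)) ∪ Set.range (fun j => liftYZ r s t (g j)))

/-- The subfield `ℚ(X,Y,Z)` (generated by all the indeterminates). -/
def QXYZ (r s t : ℕ) : Subfield (FracXYZ r s t) :=
  Subfield.closure (Set.range (xVar r s t) ∪ Set.range (yVar r s t) ∪ Set.range (zVar r s t))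

/-- The subfield `ℚ(f,Y,Z)`. -/
def QfYZ (r s t m : ℕ) (f : Fin m → MvPolynomial (Fin r ⊕ Fin s) ℚ) :
    Subfield (FracXYZ r s t) :=
  Subfield.closure
    (Set.range (fun i => liftXY r s t (f i)) ∪ Set.range (yVar r s t) ∪ Set.range (zVar r s t))

/-- The subfield `ℚ(X,Y)`. -/
def QXY (r s t : ℕ) : Subfield (FracXYZ r s t) :=
  Subfield.closure (Set.range (xVar r s t) ∪ Set.range (yVar r s t))

/-- The subfield `ℚ(f,Y)`. -/
def QfY (r s t m : ℕ) (f : Fin m → MvPolynomial (Fin r ⊕ Fin s) ℚ) :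
    Subfield (FracXYZ r s t) :=
  Subfield.closure (Set.range (fun i => liftXY r s t (f i)) ∪ Set.range (yVar r s t))


/-!
Write `R_S(K)` (`radicalClosure S K`) for the union of all towers over `K` in which each step
adjoins an `n`-th root with `n ∈ S` (`S = {n | 0 < n}` or `S = {2}`). It is the smallest subfield
containing `K` that is closed under such roots, and since every field in the statement is finitely
generated, `L : K` is solvable iff `L ≤ R_S(K)`. The reverse implication is then formal, because
`ℚ(X,Y,Z) ≤ ℚ(f,Y,Z) ⊔ ℚ(X,Y)` and `R_S(ℚ(f,Y)) ≤ R_S(ℚ(f,g))`.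

For the forward implication, specialise `Z` to a rational point `a`. For generic `a` every
element of `ℚ(X,Y,Z)` has a well-defined specialisation, and the elements whose specialisation
lies in `R_S(ℚ(f,Y))` for generic `a` form a root-closed subfield. It contains `ℚ(f,Y,Z)`, since
`f` and `Y` are fixed and `Z` is sent into `ℚ`, so it contains `R_S(ℚ(f,g))`. The variables `X`
specialise to themselves, so if they lie in `R_S(ℚ(f,g))` they lie in `R_S(ℚ(f,Y))`.
-/
theorem Relation.reflTransGen_iff_exists_fin {α : Type*} {R : α → α → Prop} {a b : α} :
    Relation.ReflTransGen R a b ↔ ∃ t : ℕ, ∃ c : Fin (t + 1) → α,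
      c 0 = a ∧ c (Fin.last t) = b ∧ ∀ i : Fin t, R (c i.castSucc) (c i.succ) := by
  constructor
  · intro h
    induction h with
    | refl => exact ⟨0, fun _ => a, rfl, rfl, fun i => i.elim0⟩
    | @tail b b' _ hbb' ih =>
      obtain ⟨t, c, h0, hl, hc⟩ := ih
      refine ⟨t + 1, Fin.snoc c b', by simpa [Fin.snoc] using h0, by simp, fun i => ?_⟩
      induction i using Fin.lastCases with
      | last => simpa [hl] using hbb'
      | cast j =>
        rw [Fin.succ_castSucc, Fin.snoc_castSucc, Fin.snoc_castSucc]
        exact hc j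
  · rintro ⟨t, c, rfl, rfl, hc⟩
    suffices ∀ i : Fin (t + 1), Relation.ReflTransGen R (c 0) (c i) from this _
    intro i
    induction i using Fin.induction with
    | zero => exact .refl
    | succ i ih => exact ih.tail (hc i)

section RadicalTower

variable {F : Type*} [Field F]

def RadicalStep (S : Set ℕ) (K M : Subfield F) : Prop :=
  ∃ x : F, ∃ n ∈ S, x ^ n ∈ K ∧ M = K.adjoinEl x

abbrev RadicalChain (S : Set ℕ) : Subfield F → Subfield F → Prop :=
  Relation.ReflTransGen (RadicalStep S)

theorem isRadicalExtension_iff {K M : Subfield F} :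
    IsRadicalExtension K M ↔ RadicalChain {n | 0 < n} K M := by
  rw [RadicalChain, Relation.reflTransGen_iff_exists_fin]; rfl

theorem isQuadraticExtension_iff {K M : Subfield F} :
    IsQuadraticExtension K M ↔ RadicalChain {2} K M := by
  rw [RadicalChain, Relation.reflTransGen_iff_exists_fin]
  simp [IsQuadraticExtension, RadicalStep]

theorem Subfield.le_adjoinEl (K : Subfield F) (x : F) : K ≤ K.adjoinEl x :=
  fun _ hy => Subfield.subset_closure (Or.inl hy)

theorem Subfield.mem_adjoinEl_self (K : Subfield F) (x : F) : x ∈ K.adjoinEl x :=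
  Subfield.subset_closure (Or.inr rfl)

theorem Subfield.adjoinEl_eq_sup (K : Subfield F) (x : F) :
    K.adjoinEl x = K ⊔ Subfield.closure {x} := by
  rw [Subfield.adjoinEl, Subfield.closure_union, Subfield.closure_eq]

variable {S : Set ℕ}

theorem RadicalChain.le {K M : Subfield F} (h : RadicalChain S K M) : K ≤ M := by
  induction h with
  | refl => exact le_rfl
  | tail _ hstep ih =>
    obtain ⟨x, -, -, -, rfl⟩ := hstep
    exact ih.trans (Subfield.le_adjoinEl _ x)

theorem RadicalChain.sup_left {K M : Subfield F} (h : RadicalChain S K M) {K' : Subfield F}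
    (hK : K ≤ K') : RadicalChain S K' (K' ⊔ M) := by
  induction h with
  | refl => rw [sup_eq_left.mpr hK]
  | @tail B _ _ hstep ih =>
    obtain ⟨x, n, hn, hx, rfl⟩ := hstep
    refine ih.tail ⟨x, n, hn, le_sup_right (a := K') hx, ?_⟩
    rw [Subfield.adjoinEl_eq_sup, Subfield.adjoinEl_eq_sup, sup_assoc]

theorem RadicalChain.sup {K M₁ M₂ : Subfield F} (h₁ : RadicalChain S K M₁)
    (h₂ : RadicalChain S K M₂) : RadicalChain S K (M₁ ⊔ M₂) :=
  h₁.trans (h₂.sup_left h₁.le)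

def IsRootClosed (S : Set ℕ) (E : Subfield F) : Prop :=
  ∀ ⦃x : F⦄ ⦃n : ℕ⦄, n ∈ S → x ^ n ∈ E → x ∈ E

theorem RadicalChain.le_of_isRootClosed {K M E : Subfield F} (h : RadicalChain S K M)
    (hKE : K ≤ E) (hE : IsRootClosed S E) : M ≤ E := by
  induction h with
  | refl => exact hKE
  | tail _ hstep ih =>
    obtain ⟨x, n, hn, hx, rfl⟩ := hstep
    exact Subfield.closure_le.mpr <| Set.union_subset ih <|
      Set.singleton_subset_iff.mpr (hE hn (ih hx))

def radicalClosure (S : Set ℕ) (K : Subfield F) : Subfield F where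
  carrier := {x | ∃ M, RadicalChain S K M ∧ x ∈ M}
  zero_mem' := ⟨K, .refl, K.zero_mem⟩
  one_mem' := ⟨K, .refl, K.one_mem⟩
  add_mem' := fun ⟨M₁, h₁, hx⟩ ⟨_, h₂, hy⟩ =>
    ⟨_, h₁.sup h₂, add_mem (le_sup_left (a := M₁) hx) (le_sup_right (a := M₁) hy)⟩
  mul_mem' := fun ⟨M₁, h₁, hx⟩ ⟨_, h₂, hy⟩ =>
    ⟨_, h₁.sup h₂, mul_mem (le_sup_left (a := M₁) hx) (le_sup_right (a := M₁) hy)⟩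
  neg_mem' := fun ⟨M, h, hx⟩ => ⟨M, h, neg_mem hx⟩
  inv_mem' := fun _ ⟨M, h, hx⟩ => ⟨M, h, inv_mem hx⟩

theorem le_radicalClosure (K : Subfield F) : K ≤ radicalClosure S K :=
  fun _ hx => ⟨K, .refl, hx⟩

theorem isRootClosed_radicalClosure (K : Subfield F) : IsRootClosed S (radicalClosure S K) :=
  fun x _ hn ⟨M, hM, hxM⟩ =>
    ⟨M.adjoinEl x, hM.tail ⟨x, _, hn, hxM, rfl⟩, M.mem_adjoinEl_self x⟩

theorem radicalClosure_le {K E : Subfield F} (hKE : K ≤ E) (hE : IsRootClosed S E) :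
    radicalClosure S K ≤ E :=
  fun _ ⟨_, hM, hxM⟩ => hM.le_of_isRootClosed hKE hE hxM

theorem exists_radicalChain_of_finite {K : Subfield F} {s : Set F} (hs : s.Finite)
    (hsK : s ⊆ radicalClosure S K) : ∃ M, RadicalChain S K M ∧ s ⊆ M := by
  induction s, hs using Set.Finite.induction_on with
  | empty => exact ⟨K, .refl, Set.empty_subset _⟩
  | @insert x s _ _ ih =>
    obtain ⟨M₁, h₁, hx⟩ := hsK (Set.mem_insert x s)
    obtain ⟨M₂, h₂, hs⟩ := ih ((Set.subset_insert x s).trans hsK)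
    exact ⟨M₁ ⊔ M₂, h₁.sup h₂, Set.insert_subset (le_sup_left (a := M₁) hx)
      (hs.trans (le_sup_right (a := M₁)))⟩

theorem exists_radicalChain_iff_closure_le_radicalClosure {K : Subfield F} {s : Set F}
    [Finite s] :
    (∃ M, Subfield.closure s ≤ M ∧ RadicalChain S K M) ↔
      Subfield.closure s ≤ radicalClosure S K := by
  constructor
  · rintro ⟨M, hsM, hM⟩
    exact fun x hx => ⟨M, hM, hsM hx⟩
  · intro hsK
    obtain ⟨M, hM, hsM⟩ :=
      exists_radicalChain_of_finite s.toFinite (Subfield.subset_closure.trans hsK)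
    exact ⟨M, Subfield.closure_le.mpr hsM, hM⟩

theorem radicallySolvable_closure_iff {K : Subfield F} {s : Set F} [Finite s] :
    RadicallySolvable K (Subfield.closure s) ↔
      Subfield.closure s ≤ radicalClosure {n | 0 < n} K := by
  simp only [RadicallySolvable, isRadicalExtension_iff]
  exact exists_radicalChain_iff_closure_le_radicalClosure

theorem quadraticallySolvable_closure_iff {K : Subfield F} {s : Set F} [Finite s] :
    QuadraticallySolvable K (Subfield.closure s) ↔
      Subfield.closure s ≤ radicalClosure {2} K := by
  simp only [QuadraticallySolvable, isQuadraticExtension_iff]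
  exact exists_radicalChain_iff_closure_le_radicalClosure

end RadicalTower

section Specialization

variable {A K K' : Type*} [CommRing A] [Field K] [Algebra A K] [Field K']

def SpecializesTo (φ : A →+* K') (h : K) (y : K') : Prop :=
  ∃ p q : A, φ q ≠ 0 ∧ h = algebraMap A K p / algebraMap A K q ∧ y = φ p / φ q

variable {φ : A →+* K'} {h h₁ h₂ : K} {y y₁ y₂ : K'}

theorem specializesTo_algebraMap (p : A) : SpecializesTo φ (algebraMap A K p) (φ p) :=
  ⟨p, 1, by simp, by simp, by simp⟩

theorem specializesTo_zero : SpecializesTo φ (0 : K) 0 := by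
  simpa using specializesTo_algebraMap (K := K) (φ := φ) 0

theorem specializesTo_one : SpecializesTo φ (1 : K) 1 := by
  simpa using specializesTo_algebraMap (K := K) (φ := φ) 1

theorem specializesTo_div {p q : A} (hq : φ q ≠ 0) :
    SpecializesTo φ (algebraMap A K p / algebraMap A K q) (φ p / φ q) :=
  ⟨p, q, hq, rfl, rfl⟩

theorem algebraMap_ne_zero_of_map_ne_zero [IsFractionRing A K] {q : A} (hq : φ q ≠ 0) :
    algebraMap A K q ≠ 0 :=
  (map_ne_zero_iff _ (IsFractionRing.injective A K)).mpr (ne_of_apply_ne φ (by rwa [map_zero]))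

namespace SpecializesTo

theorem mul (h₁' : SpecializesTo φ h₁ y₁) (h₂' : SpecializesTo φ h₂ y₂) :
    SpecializesTo φ (h₁ * h₂) (y₁ * y₂) := by
  obtain ⟨p₁, q₁, hq₁, rfl, rfl⟩ := h₁'
  obtain ⟨p₂, q₂, hq₂, rfl, rfl⟩ := h₂'
  refine ⟨p₁ * p₂, q₁ * q₂, by simp [hq₁, hq₂], ?_, ?_⟩ <;>
    simp only [map_mul, div_mul_div_comm]

theorem neg (h' : SpecializesTo φ h y) : SpecializesTo φ (-h) (-y) := by
  obtain ⟨p, q, hq, rfl, rfl⟩ := h'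
  exact ⟨-p, q, hq, by rw [map_neg, neg_div], by rw [map_neg, neg_div]⟩

theorem inv (h' : SpecializesTo φ h y) (hy : y ≠ 0) : SpecializesTo φ h⁻¹ y⁻¹ := by
  obtain ⟨p, q, hq, rfl, rfl⟩ := h'
  exact ⟨q, p, (div_ne_zero_iff.mp hy).1, by rw [inv_div], by rw [inv_div]⟩

theorem pow (h' : SpecializesTo φ h y) (n : ℕ) : SpecializesTo φ (h ^ n) (y ^ n) := by
  induction n with
  | zero => simpa using specializesTo_one
  | succ n ih => simpa [pow_succ] using ih.mul h'

variable [IsFractionRing A K]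

theorem add (h₁' : SpecializesTo φ h₁ y₁) (h₂' : SpecializesTo φ h₂ y₂) :
    SpecializesTo φ (h₁ + h₂) (y₁ + y₂) := by
  obtain ⟨p₁, q₁, hq₁, rfl, rfl⟩ := h₁'
  obtain ⟨p₂, q₂, hq₂, rfl, rfl⟩ := h₂'
  have := algebraMap_ne_zero_of_map_ne_zero (K := K) hq₁
  have := algebraMap_ne_zero_of_map_ne_zero (K := K) hq₂
  refine ⟨p₁ * q₂ + p₂ * q₁, q₁ * q₂, by simp [hq₁, hq₂], ?_, ?_⟩ <;>
  · simp only [map_add, map_mul]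
    field_simp

theorem unique (h₁' : SpecializesTo φ h y₁) (h₂' : SpecializesTo φ h y₂) :
    y₁ = y₂ := by
  obtain ⟨p₁, q₁, hq₁, hh, rfl⟩ := h₁'
  obtain ⟨p₂, q₂, hq₂, hh', rfl⟩ := h₂'
  have hcross : p₁ * q₂ = p₂ * q₁ := by
    apply IsFractionRing.injective A K
    rw [hh', div_eq_div_iff (algebraMap_ne_zero_of_map_ne_zero hq₂)
      (algebraMap_ne_zero_of_map_ne_zero hq₁)] at hh
    simpa only [map_mul] using hh.symm
  rw [div_eq_div_iff (G₀ := K') hq₁ hq₂, ← map_mul, ← map_mul, hcross]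

end SpecializesTo

end Specialization

section Generic

open Filter

variable {ι A K K' : Type*} [CommRing A] [IsDomain A] [Field K] [Algebra A K]
  [IsFractionRing A K] [Field K']

def genericFilter (φ : ι → A →+* K') : Filter ι where
  sets := {U | ∃ q ≠ 0, {i | φ i q ≠ 0} ⊆ U}
  univ_sets := ⟨1, one_ne_zero, Set.subset_univ _⟩
  sets_of_superset := fun ⟨q, hq, hqU⟩ hUV => ⟨q, hq, hqU.trans hUV⟩
  inter_sets := fun ⟨q₁, hq₁, h₁⟩ ⟨q₂, hq₂, h₂⟩ =>
    ⟨q₁ * q₂, mul_ne_zero hq₁ hq₂, fun i hi =>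
      ⟨h₁ (left_ne_zero_of_mul (by rwa [← map_mul])),
        h₂ (right_ne_zero_of_mul (by rwa [← map_mul]))⟩⟩

variable {φ : ι → A →+* K'}

theorem eventually_map_ne_zero {q : A} (hq : q ≠ 0) :
    ∀ᶠ i in genericFilter φ, φ i q ≠ 0 :=
  ⟨q, hq, subset_rfl⟩

theorem genericFilter_neBot (hφ : ∀ q ≠ 0, ∃ i, φ i q ≠ 0) :
    (genericFilter φ).NeBot := by
  refine ⟨fun hbot => ?_⟩
  obtain ⟨q, hq, hq_empty⟩ := (Filter.ext_iff.mp hbot ∅).mpr trivial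
  obtain ⟨i, hi⟩ := hφ q hq
  exact hq_empty hi

theorem eventually_specializesTo (h : K) :
    ∀ᶠ i in genericFilter φ, ∃ y, SpecializesTo (φ i) h y := by
  obtain ⟨p, q, hq, rfl⟩ := IsFractionRing.div_surjective (A := A) h
  filter_upwards [eventually_map_ne_zero (nonZeroDivisors.ne_zero hq)] with i hi
  exact ⟨_, specializesTo_div hi⟩

theorem eventually_specializesTo_ne_zero {h : K} (h0 : h ≠ 0) :
    ∀ᶠ i in genericFilter φ, ∃ y ≠ 0, SpecializesTo (φ i) h y := by
  obtain ⟨p, q, hq, rfl⟩ := IsFractionRing.div_surjective (A := A) h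
  have hp : p ≠ 0 := by rintro rfl; simp at h0
  filter_upwards [eventually_map_ne_zero (nonZeroDivisors.ne_zero hq),
    eventually_map_ne_zero (φ := φ) hp] with i hq' hp'
  exact ⟨_, div_ne_zero hp' hq', specializesTo_div hq'⟩

variable (K φ) in
def genericComap (R : Subfield K') : Subfield K where
  carrier := {h | ∀ᶠ i in genericFilter φ, ∃ y ∈ R, SpecializesTo (φ i) h y}
  zero_mem' := by
    simp only [Set.mem_ofPred_eq]
    exact .of_forall fun _ => ⟨0, R.zero_mem, specializesTo_zero⟩
  one_mem' := by
    simp only [Set.mem_ofPred_eq]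
    exact .of_forall fun _ => ⟨1, R.one_mem, specializesTo_one⟩
  add_mem' := fun h₁ h₂ => by
    simp only [Set.mem_ofPred_eq] at *
    filter_upwards [h₁, h₂] with i ⟨y₁, hy₁, hs₁⟩ ⟨y₂, hy₂, hs₂⟩
    exact ⟨_, add_mem hy₁ hy₂, hs₁.add hs₂⟩
  mul_mem' := fun h₁ h₂ => by
    simp only [Set.mem_ofPred_eq] at *
    filter_upwards [h₁, h₂] with i ⟨y₁, hy₁, hs₁⟩ ⟨y₂, hy₂, hs₂⟩
    exact ⟨_, mul_mem hy₁ hy₂, hs₁.mul hs₂⟩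
  neg_mem' := fun h => by
    simp only [Set.mem_ofPred_eq] at *
    filter_upwards [h] with i ⟨y, hy, hs⟩
    exact ⟨_, neg_mem hy, hs.neg⟩
  inv_mem' := fun h hh => by
    simp only [Set.mem_ofPred_eq] at *
    rcases eq_or_ne h 0 with rfl | h0
    · simpa using hh
    filter_upwards [hh, eventually_specializesTo_ne_zero h0]
      with i ⟨y, hy, hs⟩ ⟨y', hy', hs'⟩
    exact ⟨_, inv_mem hy, hs.inv (hs.unique hs' ▸ hy')⟩

theorem mem_genericComap {R : Subfield K'} {h : K} :
    h ∈ genericComap K φ R ↔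
      ∀ᶠ i in genericFilter φ, ∃ y ∈ R, SpecializesTo (φ i) h y :=
  Iff.rfl

theorem isRootClosed_genericComap {S : Set ℕ} {R : Subfield K'} (hR : IsRootClosed S R) :
    IsRootClosed S (genericComap K φ R) := fun x n hn hx => by
  filter_upwards [hx, eventually_specializesTo (φ := φ) x] with i ⟨z, hz, hsz⟩ ⟨y, hsy⟩
  exact ⟨y, hR hn ((hsy.pow n).unique hsz ▸ hz), hsy⟩

theorem mem_of_mem_genericComap [(genericFilter φ).NeBot] {R : Subfield K'} {h : K} {y : K'}
    (hh : h ∈ genericComap K φ R) (hy : ∀ i, SpecializesTo (φ i) h y) : y ∈ R := by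
  obtain ⟨i, z, hz, hs⟩ := (mem_genericComap.mp hh).exists
  rwa [(hy i).unique hs]

end Generic

namespace MvPolynomial

variable {σ τ R : Type*} [CommRing R]

open Classical in
def specialize (Z : Set σ) (a : σ → R) :
    MvPolynomial σ R →ₐ[R] MvPolynomial σ R :=
  aeval fun v => if v ∈ Z then C (a v) else X v

variable {Z : Set σ}

theorem specialize_X_of_mem (a : σ → R) {v : σ} (hv : v ∈ Z) :
    specialize Z a (X v) = C (a v) := by
  simp [specialize, hv]

theorem specialize_X_of_not_mem (a : σ → R) {v : σ} (hv : v ∉ Z) :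
    specialize Z a (X v) = X v := by
  simp [specialize, hv]

theorem specialize_rename (a : σ → R) {k : τ → σ} (hk : ∀ u, k u ∉ Z)
    (p : MvPolynomial τ R) :
    specialize Z a (rename k p) = rename k p := by
  rw [specialize, aeval_rename, rename_eq_aeval]
  congr 2
  funext u
  simp [hk]

theorem exists_specialize_ne_zero [IsDomain R] [Infinite R] {p : MvPolynomial σ R} (hp : p ≠ 0) :
    ∃ a, specialize Z a p ≠ 0 := by
  by_contra! h
  refine hp (funext fun v => ?_)
  have := congrArg (aeval v) (h v)
  rw [specialize, comp_aeval_apply] at this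
  simpa [apply_ite] using this

theorem map_mem_of_forall_X_mem {F : Type*} [Field F]
    (ψ : MvPolynomial σ ℚ →+* F) {E : Subfield F} (hX : ∀ v, ψ (X v) ∈ E)
    (p : MvPolynomial σ ℚ) : ψ p ∈ E := by
  induction p using MvPolynomial.induction_on with
  | C c => simpa only [← RingHom.comp_apply, eq_ratCast] using SubfieldClass.ratCast_mem E c
  | add p q hp hq => simpa only [map_add] using add_mem hp hq
  | mul_X p v hp => simpa only [map_mul] using mul_mem hp (hX v)

end MvPolynomial

section RationalFunctions

open MvPolynomial

variable {r s t m n : ℕ} {f : Fin m → MvPolynomial (Fin r ⊕ Fin s) ℚ}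
  {g : Fin n → MvPolynomial (Fin s ⊕ Fin t) ℚ}

theorem Qfg_le_QfYZ : Qfg r s t m n f g ≤ QfYZ r s t m f := by
  refine Subfield.closure_le.mpr ?_
  rintro _ (⟨i, rfl⟩ | ⟨j, rfl⟩)
  · exact Subfield.subset_closure (by simp)
  · refine map_mem_of_forall_X_mem _ (fun v => ?_) (g j)
    rcases v with _ | _ <;> exact Subfield.subset_closure (by simp [liftYZ, yVar, zVar])

theorem QfYZ_le_QXYZ : QfYZ r s t m f ≤ QXYZ r s t := by
  refine Subfield.closure_le.mpr ?_
  rintro _ ((⟨i, rfl⟩ | ⟨j, rfl⟩) | ⟨k, rfl⟩)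
  · refine map_mem_of_forall_X_mem _ (fun v => ?_) (f i)
    rcases v with _ | _ <;> exact Subfield.subset_closure (by simp [liftXY, xVar, yVar])
  all_goals exact Subfield.subset_closure (by simp)

theorem QfY_le_QfYZ : QfY r s t m f ≤ QfYZ r s t m f :=
  Subfield.closure_mono Set.subset_union_left

theorem QXYZ_le_QfYZ_sup_QXY : QXYZ r s t ≤ QfYZ r s t m f ⊔ QXY r s t := by
  refine Subfield.closure_le.mpr ?_
  rintro _ ((⟨i, rfl⟩ | ⟨j, rfl⟩) | ⟨k, rfl⟩)
  · exact le_sup_right (a := QfYZ r s t m f) (Subfield.subset_closure (by simp))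
  · exact le_sup_right (a := QfYZ r s t m f) (Subfield.subset_closure (by simp))
  · exact le_sup_left (b := QXY r s t) (Subfield.subset_closure (by simp))

variable (r s t) in
def zVars : Set (Fin r ⊕ (Fin s ⊕ Fin t)) := Set.range (Sum.inr ∘ Sum.inr)

variable (r s t) in
def zSpecialization (a : Fin r ⊕ (Fin s ⊕ Fin t) → ℚ) :
    MvPolynomial (Fin r ⊕ (Fin s ⊕ Fin t)) ℚ →+* FracXYZ r s t :=
  (toFracXYZ r s t).comp (specialize (zVars r s t) a).toRingHom

theorem genericFilter_zSpecialization_neBot : (genericFilter (zSpecialization r s t)).NeBot := by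
  refine genericFilter_neBot fun q hq => ?_
  obtain ⟨a, ha⟩ := exists_specialize_ne_zero (Z := zVars r s t) hq
  exact ⟨a, (map_ne_zero_iff _ (IsFractionRing.injective _ _)).mpr ha⟩

theorem specializesTo_of_specialize_eq {a : Fin r ⊕ (Fin s ⊕ Fin t) → ℚ}
    {p : MvPolynomial (Fin r ⊕ (Fin s ⊕ Fin t)) ℚ}
    (hp : specialize (zVars r s t) a p = p) :
    SpecializesTo (zSpecialization r s t a) (toFracXYZ r s t p) (toFracXYZ r s t p) := by
  convert specializesTo_algebraMap (K := FracXYZ r s t) (φ := zSpecialization r s t a) p using 1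
  · rfl
  · simp [zSpecialization, hp]

theorem specializesTo_zVar (a : Fin r ⊕ (Fin s ⊕ Fin t) → ℚ) (k : Fin t) :
    SpecializesTo (zSpecialization r s t a) (zVar r s t k) (a (.inr (.inr k)) : FracXYZ r s t) := by
  convert specializesTo_algebraMap (X (Sum.inr (Sum.inr k)))
  · rfl
  · rw [zSpecialization, RingHom.comp_apply, AlgHom.toRingHom_eq_coe, AlgHom.coe_toRingHom,
      specialize_X_of_mem (Z := zVars r s t) (v := Sum.inr (Sum.inr k)) a ⟨k, rfl⟩]
    exact (eq_ratCast ((toFracXYZ r s t).comp C) _).symm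

theorem QfYZ_le_genericComap {R : Subfield (FracXYZ r s t)} (hR : QfY r s t m f ≤ R) :
    QfYZ r s t m f ≤ genericComap (FracXYZ r s t) (zSpecialization r s t) R := by
  refine Subfield.closure_le.mpr ?_
  rintro _ ((⟨i, rfl⟩ | ⟨j, rfl⟩) | ⟨k, rfl⟩) <;>
    refine mem_genericComap.mpr (.of_forall fun a => ?_)
  · refine ⟨liftXY r s t (f i), hR (Subfield.subset_closure (by simp)),
      specializesTo_of_specialize_eq ?_⟩
    refine specialize_rename a (fun u => ?_) (f i)
    rcases u with _ | _ <;> simp [zVars]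
  · refine ⟨yVar r s t j, hR (Subfield.subset_closure (by simp)),
      specializesTo_of_specialize_eq ?_⟩
    exact specialize_X_of_not_mem a (by simp [zVars])
  · exact ⟨_, SubfieldClass.ratCast_mem R _, specializesTo_zVar a k⟩

theorem xVar_mem_radicalClosure {S : Set ℕ}
    (h : QXYZ r s t ≤ radicalClosure S (Qfg r s t m n f g)) (i : Fin r) :
    xVar r s t i ∈ radicalClosure S (QfY r s t m f) := by
  have := genericFilter_zSpecialization_neBot (r := r) (s := s) (t := t)
  have hgen : radicalClosure S (Qfg r s t m n f g) ≤
      genericComap (FracXYZ r s t) (zSpecialization r s t) (radicalClosure S (QfY r s t m f)) :=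
    radicalClosure_le (Qfg_le_QfYZ.trans (QfYZ_le_genericComap (le_radicalClosure _)))
      (isRootClosed_genericComap (isRootClosed_radicalClosure _))
  refine mem_of_mem_genericComap (h := xVar r s t i)
    (hgen (h (Subfield.subset_closure (by simp)))) fun a => ?_
  exact specializesTo_of_specialize_eq (specialize_X_of_not_mem a (by simp [zVars]))

theorem QXYZ_le_radicalClosure_iff (S : Set ℕ) :
    QXYZ r s t ≤ radicalClosure S (Qfg r s t m n f g) ↔
      QfYZ r s t m f ≤ radicalClosure S (Qfg r s t m n f g) ∧
        QXY r s t ≤ radicalClosure S (QfY r s t m f) := by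
  constructor
  · intro h
    refine ⟨QfYZ_le_QXYZ.trans h, Subfield.closure_le.mpr ?_⟩
    rintro _ (⟨i, rfl⟩ | ⟨j, rfl⟩)
    · exact xVar_mem_radicalClosure h i
    · exact le_radicalClosure _ (Subfield.subset_closure (by simp))
  · rintro ⟨h₁, h₂⟩
    refine QXYZ_le_QfYZ_sup_QXY.trans (sup_le h₁ (h₂.trans ?_))
    exact radicalClosure_le (QfY_le_QfYZ.trans h₁) (isRootClosed_radicalClosure _)

end RationalFunctions

theorem statement4_general (r s t m n : ℕ)
    (f : Fin m → MvPolynomial (Fin r ⊕ Fin s) ℚ)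
    (g : Fin n → MvPolynomial (Fin s ⊕ Fin t) ℚ) :
    (RadicallySolvable (Qfg r s t m n f g) (QXYZ r s t) ↔
      (RadicallySolvable (Qfg r s t m n f g) (QfYZ r s t m f) ∧
        RadicallySolvable (QfY r s t m f) (QXY r s t))) ∧
    (QuadraticallySolvable (Qfg r s t m n f g) (QXYZ r s t) ↔
      (QuadraticallySolvable (Qfg r s t m n f g) (QfYZ r s t m f) ∧
        QuadraticallySolvable (QfY r s t m f) (QXY r s t))) := by
  simp only [QXYZ, QfYZ, QXY, radicallySolvable_closure_iff, quadraticallySolvable_closure_iff]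
  exact ⟨QXYZ_le_radicalClosure_iff _, QXYZ_le_radicalClosure_iff _⟩

/-- Lemma: with `f ∈ ℚ[X,Y]^m`, `g ∈ ℚ[Y,Z]^n` and `ℚ(X,Y,Z)` finite over `ℚ(f,g)`,
the extension `ℚ(X,Y,Z) : ℚ(f,g)` is radically (quadratically) solvable iff both
`ℚ(f,Y,Z) : ℚ(f,g)` and `ℚ(X,Y) : ℚ(f,Y)` are. -/
theorem statement4 (r s t m n : ℕ)
    (f : Fin m → MvPolynomial (Fin r ⊕ Fin s) ℚ)
    (g : Fin n → MvPolynomial (Fin s ⊕ Fin t) ℚ)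
    (hfin : FiniteExtS (Qfg r s t m n f g) (QXYZ r s t)) :
    (RadicallySolvable (Qfg r s t m n f g) (QXYZ r s t) ↔
      (RadicallySolvable (Qfg r s t m n f g) (QfYZ r s t m f) ∧
        RadicallySolvable (QfY r s t m f) (QXY r s t))) ∧
    (QuadraticallySolvable (Qfg r s t m n f g) (QXYZ r s t) ↔
      (QuadraticallySolvable (Qfg r s t m n f g) (QfYZ r s t m f) ∧
        QuadraticallySolvable (QfY r s t m f) (QXY r s t))) :=
  statement4_general r s t m n f g
end
end

section
/- Let K be a field with ℚ ⊆ K ⊂ ℂ, let S = {f₁,…,f_m} ⊂ K[X₁,…,X_n], let I ⊂ K[X₁,…,X_n] be the ideal generated by S, and let W = {x ∈ ℂⁿ : f_i(x) = 0 for all 1 ≤ i ≤ m}. Let I₁ = I ∩ K[X₁]. Then I₁ is an ideal of K[X₁] generated by a single polynomial h₁ ∈ K[X₁]. Furthermore, if W is non-empty and finite and h₁(a) = 0 for some a ∈ ℂ, then there exists x = (x₁,…,x_n) ∈ W with x₁ = a. -/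
/-!
The elimination ideal is principal because `K[X₁]` is a principal ideal ring.

For the extension property, let `Q = ∏_{w ∈ W} (X₁ - w₁) ∈ ℂ[X₁]`. It vanishes on `W`, so by the
Nullstellensatz some power `Q ^ N` lies in the elimination ideal of the extended ideal
`I · ℂ[X₁,…,X_n]`. Elimination commutes with the base change `K ⊆ ℂ`: applying a `K`-linear
functional `ℂ → K` to the coefficients maps `I · ℂ[X₁,…,X_n]` into `I`, and a polynomial over `ℂ`
all of whose images under such functionals lie in `I₁` lies in `I₁ · ℂ[X₁]`, as one sees by
expanding its coefficients in a `K`-basis of `ℂ`. Hence `h₁ ∣ Q ^ N` in `ℂ[X₁]`, so `Q(a) = 0`,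
that is, `a = w₁` for some `w ∈ W`.
-/

section mapCoeffs

variable {K L : Type*} [CommSemiring K] [CommSemiring L] [Algebra K L]

namespace Polynomial

noncomputable def mapCoeffs (φ : L →ₗ[K] K) : L[X] →+ K[X] where
  toFun p := ⟨AddMonoidAlgebra.map φ.toAddMonoidHom p.toFinsupp⟩
  map_zero' := by simp
  map_add' p q := by simp [AddMonoidAlgebra.map_add]

@[simp]
theorem coeff_mapCoeffs (φ : L →ₗ[K] K) (p : L[X]) (n : ℕ) :
    (mapCoeffs φ p).coeff n = φ (p.coeff n) := by
  cases p; rfl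

theorem mapCoeffs_monomial (φ : L →ₗ[K] K) (n : ℕ) (c : L) :
    mapCoeffs φ (monomial n c) = monomial n (φ c) := by
  ext k
  rw [coeff_mapCoeffs, coeff_monomial, coeff_monomial, apply_ite φ, map_zero]

end Polynomial

namespace MvPolynomial
variable {σ : Type*}

noncomputable def mapCoeffs (φ : L →ₗ[K] K) : MvPolynomial σ L →+ MvPolynomial σ K where
  toFun := AddMonoidAlgebra.map φ.toAddMonoidHom
  map_zero' := AddMonoidAlgebra.map_zero _
  map_add' := AddMonoidAlgebra.map_add _

@[simp]
theorem coeff_mapCoeffs (φ : L →ₗ[K] K) (p : MvPolynomial σ L) (m : σ →₀ ℕ) :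
    (mapCoeffs φ p).coeff m = φ (p.coeff m) := rfl

theorem mapCoeffs_monomial (φ : L →ₗ[K] K) (m : σ →₀ ℕ) (c : L) :
    mapCoeffs φ (monomial m c) = monomial m (φ c) := by
  classical
  refine MvPolynomial.ext _ _ fun n => ?_
  rw [coeff_mapCoeffs, coeff_monomial, coeff_monomial, apply_ite φ, map_zero]

theorem mapCoeffs_mul_map (φ : L →ₗ[K] K) (p : MvPolynomial σ L) (q : MvPolynomial σ K) :
    mapCoeffs φ (p * map (algebraMap K L) q) = mapCoeffs φ p * q := by
  classical
  refine MvPolynomial.ext _ _ fun m => ?_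
  simp only [coeff_mapCoeffs, coeff_mul, coeff_map, map_sum]
  refine Finset.sum_congr rfl fun uv _ => ?_
  rw [← Algebra.commutes, ← Algebra.smul_def, map_smul, smul_eq_mul, mul_comm]

theorem mapCoeffs_mem_of_mem_map {I : Ideal (MvPolynomial σ K)} {p : MvPolynomial σ L}
    (hp : p ∈ I.map (map (algebraMap K L))) (φ : L →ₗ[K] K) : mapCoeffs φ p ∈ I := by
  -- `mapCoeffs φ` is not multiplicative, so the induction carries an arbitrary left factor `c`.
  suffices ∀ c, mapCoeffs φ (c * p) ∈ I by simpa using this 1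
  induction hp using Submodule.span_induction with
  | mem x hx =>
    obtain ⟨q, hq, rfl⟩ := hx
    exact fun c => mapCoeffs_mul_map φ c q ▸ I.mul_mem_left _ hq
  | zero => simp
  | add x y _ _ hx hy => exact fun c => by rw [mul_add, map_add]; exact I.add_mem (hx c) (hy c)
  | smul a x _ hx => exact fun c => by rw [smul_eq_mul, ← mul_assoc]; exact hx _

theorem mapCoeffs_eval₂_C_X (φ : L →ₗ[K] K) (i : σ) (p : Polynomial L) :
    mapCoeffs φ (p.eval₂ C (X i)) = (Polynomial.mapCoeffs φ p).eval₂ C (X i) := by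
  induction p using Polynomial.induction_on' with
  | add p q hp hq => simp only [Polynomial.eval₂_add, map_add, hp, hq]
  | monomial k c =>
    rw [Polynomial.mapCoeffs_monomial, Polynomial.eval₂_monomial, Polynomial.eval₂_monomial,
      C_mul_X_pow_eq_monomial, C_mul_X_pow_eq_monomial, mapCoeffs_monomial]

end MvPolynomial

end mapCoeffs

namespace Polynomial

theorem mem_map_of_forall_mapCoeffs_mem {K L : Type*} [Field K] [CommRing L] [Algebra K L]
    {J : Ideal K[X]} {p : L[X]} (h : ∀ φ : L →ₗ[K] K, mapCoeffs φ p ∈ J) :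
    p ∈ J.map (mapRingHom (algebraMap K L)) := by
  classical
  let b := Module.Basis.ofVectorSpace K L
  let s := p.support.biUnion fun n => (b.repr (p.coeff n)).support
  have hp : p = ∑ j ∈ s, C (b j) * map (algebraMap K L) (mapCoeffs (b.coord j) p) := by
    ext n
    simp only [finsetSum_coeff, coeff_C_mul, coeff_map, coeff_mapCoeffs, Module.Basis.coord_apply]
    have hsub : (b.repr (p.coeff n)).support ⊆ s := by
      by_cases hn : n ∈ p.support
      · exact Finset.subset_biUnion_of_mem (fun n => (b.repr (p.coeff n)).support) hn
      · simp [notMem_support_iff.mp hn]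
    conv_lhs => rw [← b.linearCombination_repr (p.coeff n), Finsupp.linearCombination_apply,
      Finsupp.sum_of_support_subset _ hsub _ (by simp)]
    simp [Algebra.smul_def, mul_comm]
  rw [hp]
  exact Ideal.sum_mem _ fun j _ => Ideal.mul_mem_left _ _ (Ideal.mem_map_of_mem _ (h _))

end Polynomial

namespace MvPolynomial

theorem comap_eval₂RingHom_map_le_map_comap {K L σ : Type*} [Field K] [CommRing L]
    [Algebra K L] (I : Ideal (MvPolynomial σ K)) (i : σ) :
    (I.map (map (algebraMap K L))).comap (Polynomial.eval₂RingHom C (X i)) ≤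
      (I.comap (Polynomial.eval₂RingHom C (X i))).map (Polynomial.mapRingHom (algebraMap K L)) :=
  fun p hp => Polynomial.mem_map_of_forall_mapCoeffs_mem fun φ => by
    rw [Ideal.mem_comap, Polynomial.coe_eval₂RingHom, ← mapCoeffs_eval₂_C_X]
    exact mapCoeffs_mem_of_mem_map hp φ

variable {k K σ : Type*} [Field k] [Field K] [Algebra k K]

theorem zeroLocus_map_algebraMap (I : Ideal (MvPolynomial σ k)) :
    zeroLocus K (I.map (map (algebraMap k K))) = zeroLocus K I := by
  ext x
  refine ⟨fun hx p hp => ?_, fun hx q hq => ?_⟩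
  · rw [← aeval_map_algebraMap K]
    exact hx _ (Ideal.mem_map_of_mem _ hp)
  · refine (Ideal.map_le_iff_le_comap.2 (fun p hp => ?_) hq : q ∈ RingHom.ker (aeval x))
    rw [Ideal.mem_comap, RingHom.mem_ker, aeval_map_algebraMap]
    exact hx p hp

theorem exists_pow_prod_X_sub_C_mem_comap [IsAlgClosed k] [Finite σ] (J : Ideal (MvPolynomial σ k))
    (hJ : (zeroLocus k J).Finite) (i : σ) :
    ∃ N : ℕ, (∏ w ∈ hJ.toFinset, (Polynomial.X - Polynomial.C (w i))) ^ N ∈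
      J.comap (Polynomial.eval₂RingHom C (X i)) := by
  have hvanish : Polynomial.eval₂RingHom C (X i)
      (∏ w ∈ hJ.toFinset, (Polynomial.X - Polynomial.C (w i))) ∈
        vanishingIdeal k (zeroLocus k J) := fun x hx => by
    simpa [map_prod] using Finset.prod_eq_zero (hJ.mem_toFinset.2 hx) (sub_self (x i))
  rw [vanishingIdeal_zeroLocus_eq_radical] at hvanish
  obtain ⟨N, hN⟩ := hvanish
  exact ⟨N, by rwa [Ideal.mem_comap, map_pow]⟩

end MvPolynomial

/-- Lemma: let `K ⊆ ℂ` be a subfield, `I ⊆ K[X₁,…,X_n]` the ideal generated by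
`S = {f₁,…,f_m}`, and `W ⊆ ℂⁿ` the common zero set of `S`. Then the elimination
ideal `I₁ = I ∩ K[X₁]` is generated by a single polynomial `h₁`, and if `W` is
non-empty and finite then every complex root `a` of `h₁` extends to a point of `W`
with first coordinate `a`. -/
theorem statement5 (n m : ℕ) (hn : 0 < n) (K : Subfield ℂ)
    (f : Fin m → MvPolynomial (Fin n) ↥K) :
    (∃ h₁ : Polynomial ↥K,
      Ideal.comap
          (Polynomial.eval₂RingHom (MvPolynomial.C : ↥K →+* MvPolynomial (Fin n) ↥K)
            (MvPolynomial.X ⟨0, hn⟩))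
          (Ideal.span (Set.range f)) =
        Ideal.span {h₁}) ∧
    (∀ h₁ : Polynomial ↥K,
      Ideal.comap
          (Polynomial.eval₂RingHom (MvPolynomial.C : ↥K →+* MvPolynomial (Fin n) ↥K)
            (MvPolynomial.X ⟨0, hn⟩))
          (Ideal.span (Set.range f)) =
        Ideal.span {h₁} →
      {x : Fin n → ℂ | ∀ i, MvPolynomial.eval₂ K.subtype x (f i) = 0}.Nonempty →
      {x : Fin n → ℂ | ∀ i, MvPolynomial.eval₂ K.subtype x (f i) = 0}.Finite →
      ∀ a : ℂ, Polynomial.eval₂ K.subtype a h₁ = 0 →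
        ∃ x : Fin n → ℂ,
          (∀ i, MvPolynomial.eval₂ K.subtype x (f i) = 0) ∧ x ⟨0, hn⟩ = a) := by
  refine ⟨⟨_, (Submodule.IsPrincipal.span_singleton_generator _).symm⟩, ?_⟩
  intro h₁ hI _ hW a ha
  set I := Ideal.span (Set.range f)
  have hlocus : MvPolynomial.zeroLocus ℂ (I.map (MvPolynomial.map (algebraMap K ℂ))) ⊆
      {x | ∀ i, MvPolynomial.eval₂ K.subtype x (f i) = 0} := by
    rw [MvPolynomial.zeroLocus_map_algebraMap]
    exact fun x hx i => hx _ (Ideal.subset_span ⟨i, rfl⟩)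
  obtain ⟨N, hN⟩ := MvPolynomial.exists_pow_prod_X_sub_C_mem_comap _ (hW.subset hlocus) ⟨0, hn⟩
  have hdvd := MvPolynomial.comap_eval₂RingHom_map_le_map_comap I ⟨0, hn⟩ hN
  rw [hI, Ideal.map_span, Set.image_singleton, Ideal.mem_span_singleton] at hdvd
  have hroot : (∏ w ∈ (hW.subset hlocus).toFinset, (a - w ⟨0, hn⟩)) = 0 := by
    have hQN := Polynomial.IsRoot.dvd (by rwa [Polynomial.IsRoot, Polynomial.coe_mapRingHom,
      Polynomial.eval_map]) hdvd
    rw [Polynomial.IsRoot, Polynomial.eval_pow, Polynomial.eval_prod] at hQN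
    simpa using eq_zero_of_pow_eq_zero hQN
  obtain ⟨w, hw, hwa⟩ := Finset.prod_eq_zero_iff.1 hroot
  exact ⟨w, hlocus ((hW.subset hlocus).mem_toFinset.1 hw), (sub_eq_zero.1 hwa).symm⟩
end

section
/- Suppose (G,p) is a generic complex realisation of a graph G = (V,E) with V = {v₁,…,v_n} and n ≥ 3. Then there are exactly four realisations (G,q_j), 1 ≤ j ≤ 4, which are congruent to (G,p) and satisfy q_j(v₁) = (0,0) and q_j(v₂) = (0,z) for some z ∈ ℂ. Furthermore, ℚ(q_i) = ℚ(q_j) for all 1 ≤ i < j ≤ 4. -/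
open scoped Classical

noncomputable section

/-- A finite graph: a finite set of vertices (natural numbers) and of edges. -/
structure RGraph : Type where
  verts : Finset ℕ
  edges : Finset (Sym2 ℕ)

namespace RGraph

/-- A graph is well-formed if it has no loops and edges join vertices. -/
def WellFormed (G : RGraph) : Prop :=
  (∀ e ∈ G.edges, ¬ e.IsDiag) ∧ (∀ e ∈ G.edges, ∀ v ∈ e, v ∈ G.verts)

def union (G H : RGraph) : RGraph := ⟨G.verts ∪ H.verts, G.edges ∪ H.edges⟩

def addEdge (G : RGraph) (u v : ℕ) : RGraph := ⟨G.verts, insert s(u, v) G.edges⟩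

def deleteEdge (G : RGraph) (e : Sym2 ℕ) : RGraph := ⟨G.verts, G.edges.erase e⟩

end RGraph

/-- `d_p(u,v) = a² + b²` where `(a,b) = p u - p v`. -/
def sqDist {R : Type*} [CommRing R] (p : ℕ → R × R) (u v : ℕ) : R :=
  ((p u).1 - (p v).1) ^ 2 + ((p u).2 - (p v).2) ^ 2

/-- Two frameworks are equivalent if corresponding edges have equal squared lengths. -/
def FEquiv {R : Type*} [CommRing R] (G : RGraph) (p q : ℕ → R × R) : Prop :=
  ∀ u v : ℕ, s(u, v) ∈ G.edges → sqDist p u v = sqDist q u v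

/-- Two frameworks are congruent if all pairs of vertices have equal squared distances. -/
def FCong {R : Type*} [CommRing R] (G : RGraph) (p q : ℕ → R × R) : Prop :=
  ∀ u ∈ G.verts, ∀ v ∈ G.verts, sqDist p u v = sqDist q u v

/-- A framework is generic if the coordinates of its points are
algebraically independent over `ℚ`. -/
def FGeneric {R : Type*} [CommRing R] [Algebra ℚ R] (G : RGraph) (p : ℕ → R × R) : Prop :=
  AlgebraicIndependent ℚ
    (fun vb : {x // x ∈ G.verts} × Bool => if vb.2 then (p vb.1.1).2 else (p vb.1.1).1)

/-- A complex framework is quasi-generic if it is congruent to a generic one. -/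
def QuasiGeneric (G : RGraph) (p : ℕ → ℂ × ℂ) : Prop :=
  ∃ p' : ℕ → ℂ × ℂ, FGeneric G p' ∧ FCong G p p'

/-- A real framework is rigid if all equivalent frameworks near it are congruent to it. -/
def RigidFramework (G : RGraph) (p : ℕ → ℝ × ℝ) : Prop :=
  ∃ ε : ℝ, 0 < ε ∧ ∀ q : ℕ → ℝ × ℝ, FEquiv G p q →
    (∀ v ∈ G.verts, ((p v).1 - (q v).1) ^ 2 + ((p v).2 - (q v).2) ^ 2 < ε) →
    FCong G p q

/-- A graph is rigid if every generic real realisation is rigid. -/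
def RGraph.Rigid (G : RGraph) : Prop :=
  ∀ p : ℕ → ℝ × ℝ, FGeneric G p → RigidFramework G p

/-- A graph is minimally rigid if it is rigid but ceases to be so on deleting any edge. -/
def RGraph.MinimallyRigid (G : RGraph) : Prop :=
  G.Rigid ∧ ∀ e ∈ G.edges, ¬ (G.deleteEdge e).Rigid

/-- A graph is globally rigid if for every generic complex realisation every
equivalent realisation is congruent to it. -/
def RGraph.GloballyRigid (G : RGraph) : Prop :=
  ∀ p : ℕ → ℂ × ℂ, FGeneric G p → ∀ q : ℕ → ℂ × ℂ, FEquiv G p q → FCong G p q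

/-- `ℚ(p)`: the subfield of `ℂ` generated by the coordinates of the points of `p`. -/
def coordField (G : RGraph) (p : ℕ → ℂ × ℂ) : Subfield ℂ :=
  Subfield.closure {z : ℂ | ∃ v ∈ G.verts, z = (p v).1 ∨ z = (p v).2}

/-- `ℚ(d_G(p))`: the subfield of `ℂ` generated by the squared edge lengths of `(G,p)`. -/
def distField (G : RGraph) (p : ℕ → ℂ × ℂ) : Subfield ℂ :=
  Subfield.closure {z : ℂ | ∃ u v : ℕ, s(u, v) ∈ G.edges ∧ z = sqDist p u v}

/-- A complex framework is radically solvable if some congruent framework `(G,q)`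
has `ℚ(q) : ℚ(d_G(q))` radically solvable. -/
def RadSolvableFramework (G : RGraph) (p : ℕ → ℂ × ℂ) : Prop :=
  ∃ q : ℕ → ℂ × ℂ, FCong G p q ∧ RadicallySolvable (distField G q) (coordField G q)

def QuadSolvableFramework (G : RGraph) (p : ℕ → ℂ × ℂ) : Prop :=
  ∃ q : ℕ → ℂ × ℂ, FCong G p q ∧ QuadraticallySolvable (distField G q) (coordField G q)

/-- A graph is radically solvable if every generic realisation is radically solvable. -/
def RGraph.RadSolvable (G : RGraph) : Prop :=
  ∀ p : ℕ → ℂ × ℂ, FGeneric G p → RadSolvableFramework G p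

/-- A graph is quadratically solvable if every generic realisation is so. -/
def RGraph.QuadSolvable (G : RGraph) : Prop :=
  ∀ p : ℕ → ℂ × ℂ, FGeneric G p → QuadSolvableFramework G p

/-- Standard position with respect to `(v₁, v₂)`: `p v₁ = (0,0)` and `p v₂ = (0,z)`. -/
def StdPos (p : ℕ → ℂ × ℂ) (v₁ v₂ : ℕ) : Prop :=
  p v₁ = (0, 0) ∧ (p v₂).1 = 0

/-!
Translate `p` so that `v₁` goes to the origin and apply the orthogonal map sending
`p v₂ - p v₁` to `(0, w)`, where `w² = d_p(v₁, v₂)`; genericity makes `w ≠ 0`. Polarization at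
`v₁` shows that a congruent realisation in standard position has the same pairwise dot
products as this one. Dotting with `v₂` forces its `y`-coordinates to be `δ y` for a sign `δ`, and
then dotting with a third vertex off the line `v₁v₂` forces its `x`-coordinates to be `ε x`.
The four sign choices give four distinct realisations, and sign changes do not change the
generated field.
-/

open MvPolynomial

lemma AlgebraicIndependent.aeval_ne_zero_of_eval_ne_zero {ι R A : Type*} [CommRing R]
    [CommRing A] [Algebra R A] {f : ι → A} (hf : AlgebraicIndependent R f)
    {P : MvPolynomial ι R} (g : ι → R) (h : eval g P ≠ 0) : aeval f P ≠ 0 :=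
  fun h0 => h (by rw [hf.eq_zero_of_aeval_eq_zero P h0, map_zero])

lemma Finset.exists_mem_ne_ne_of_two_lt_card {α : Type*} [DecidableEq α] {s : Finset α}
    (hs : 2 < s.card) (a b : α) : ∃ c ∈ s, c ≠ a ∧ c ≠ b := by
  obtain ⟨c, hc, hcb⟩ := (s.erase a).exists_mem_ne
    (by have := s.pred_card_le_card_erase (a := a); omega) b
  exact ⟨c, Finset.mem_of_mem_erase hc, Finset.ne_of_mem_erase hc, hcb⟩

lemma Int.cast_units_mul_self {R : Type*} [Ring R] (ε : ℤˣ) : ((ε : ℤ) : R) * ε = 1 := by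
  rw [← Int.cast_mul, ← Units.val_mul, Int.units_mul_self, Units.val_one, Int.cast_one]

lemma exists_sign_of_mul_eq_mul {ι K : Type*} [CommRing K] [IsDomain K] {S : Set ι}
    {f g : ι → K} {w : ι} (hw : w ∈ S) (hg : g w ≠ 0) (h : ∀ u ∈ S, f u * f w = g u * g w) :
    ∃ ε : ℤˣ, ∀ u ∈ S, f u = ((ε : ℤ) : K) * g u := by
  rcases mul_self_eq_mul_self_iff.mp (h w hw) with hfg | hfg
  · exact ⟨1, fun u hu => by simpa [hfg, hg] using h u hu⟩
  · refine ⟨-1, fun u hu => mul_right_cancel₀ hg ?_⟩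
    push_cast
    linear_combination -h u hu + f u * hfg

namespace FGeneric

variable {G : RGraph} {p : ℕ → ℂ × ℂ} {v₁ v₂ v₃ : ℕ}

lemma sqDist_ne_zero (hp : FGeneric G p) (h₁ : v₁ ∈ G.verts) (h₂ : v₂ ∈ G.verts)
    (h₁₂ : v₁ ≠ v₂) : sqDist p v₂ v₁ ≠ 0 := by
  have := hp.aeval_ne_zero_of_eval_ne_zero
    (P := (X (⟨v₂, h₂⟩, false) - X (⟨v₁, h₁⟩, false)) ^ 2
      + (X (⟨v₂, h₂⟩, true) - X (⟨v₁, h₁⟩, true)) ^ 2)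
    (fun i => if i = (⟨v₂, h₂⟩, false) then 1 else 0)
    (by simp [Prod.ext_iff, h₁₂])
  simpa [sqDist] using this

lemma det_ne_zero (hp : FGeneric G p) (h₁ : v₁ ∈ G.verts) (h₂ : v₂ ∈ G.verts)
    (h₃ : v₃ ∈ G.verts) (h₁₂ : v₁ ≠ v₂) (h₁₃ : v₁ ≠ v₃) (h₂₃ : v₂ ≠ v₃) :
    ((p v₂).1 - (p v₁).1) * ((p v₃).2 - (p v₁).2)
      - ((p v₂).2 - (p v₁).2) * ((p v₃).1 - (p v₁).1) ≠ 0 := by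
  have := hp.aeval_ne_zero_of_eval_ne_zero
    (P := (X (⟨v₂, h₂⟩, false) - X (⟨v₁, h₁⟩, false))
          * (X (⟨v₃, h₃⟩, true) - X (⟨v₁, h₁⟩, true))
        - (X (⟨v₂, h₂⟩, true) - X (⟨v₁, h₁⟩, true))
          * (X (⟨v₃, h₃⟩, false) - X (⟨v₁, h₁⟩, false)))
    (fun i => if i = (⟨v₂, h₂⟩, false) ∨ i = (⟨v₃, h₃⟩, true) then 1 else 0)
    (by simp [Prod.ext_iff, h₁₂, h₁₃, h₂₃, h₂₃.symm])
  simpa using this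

end FGeneric

section StandardForm

variable {K : Type*} [Field K]

def standardForm (p : ℕ → K × K) (v₁ v₂ : ℕ) (w : K) (v : ℕ) : K × K :=
  ((((p v₂).1 - (p v₁).1) * ((p v).2 - (p v₁).2)
      - ((p v₂).2 - (p v₁).2) * ((p v).1 - (p v₁).1)) / w,
    (((p v₂).1 - (p v₁).1) * ((p v).1 - (p v₁).1)
      + ((p v₂).2 - (p v₁).2) * ((p v).2 - (p v₁).2)) / w)

variable {p : ℕ → K × K} {v₁ v₂ : ℕ} {w : K}

lemma sqDist_standardForm (hw : w ^ 2 = sqDist p v₂ v₁) (hw₀ : w ≠ 0) (u v : ℕ) :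
    sqDist (standardForm p v₁ v₂ w) u v = sqDist p u v := by
  simp only [sqDist, standardForm] at hw ⊢
  field_simp
  linear_combination (-(((p u).1 - (p v).1) ^ 2 + ((p u).2 - (p v).2) ^ 2)) * hw

lemma standardForm_self_left : standardForm p v₁ v₂ w v₁ = (0, 0) := by
  simp [standardForm]

lemma standardForm_fst_right : (standardForm p v₁ v₂ w v₂).1 = 0 := by
  simp only [standardForm]
  ring

lemma standardForm_snd_right (hw : w ^ 2 = sqDist p v₂ v₁) (hw₀ : w ≠ 0) :
    (standardForm p v₁ v₂ w v₂).2 = w := by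
  simp only [standardForm, sqDist] at hw ⊢
  field_simp
  linear_combination -hw

end StandardForm

section SignFlip

variable {R : Type*} [CommRing R]

def signFlip (s : ℤˣ × ℤˣ) (r : ℕ → R × R) (v : ℕ) : R × R :=
  (((s.1 : ℤ) : R) * (r v).1, ((s.2 : ℤ) : R) * (r v).2)

lemma signFlip_signFlip (s : ℤˣ × ℤˣ) (r : ℕ → R × R) : signFlip s (signFlip s r) = r := by
  funext v
  simp only [signFlip, ← mul_assoc, Int.cast_units_mul_self, one_mul]

lemma sqDist_signFlip (s : ℤˣ × ℤˣ) (r : ℕ → R × R) (u v : ℕ) :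
    sqDist (signFlip s r) u v = sqDist r u v := by
  simp only [sqDist, signFlip]
  linear_combination ((r u).1 - (r v).1) ^ 2 * Int.cast_units_mul_self (R := R) s.1
    + ((r u).2 - (r v).2) ^ 2 * Int.cast_units_mul_self (R := R) s.2

end SignFlip

lemma signFlip_stdPos {r : ℕ → ℂ × ℂ} {v₁ v₂ : ℕ} (hr : StdPos r v₁ v₂) (s : ℤˣ × ℤˣ) :
    StdPos (signFlip s r) v₁ v₂ := by
  simp [StdPos, signFlip, hr.1, hr.2]

lemma coordField_signFlip (G : RGraph) (s : ℤˣ × ℤˣ) (r : ℕ → ℂ × ℂ) :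
    coordField G (signFlip s r) = coordField G r := by
  have hle : ∀ s r, coordField G (signFlip s r) ≤ coordField G r := by
    intro s r
    rw [coordField, Subfield.closure_le]
    rintro _ ⟨v, hv, rfl | rfl⟩ <;>
      exact Subfield.mul_mem _ (Subfield.intCast_mem _ _)
        (Subfield.subset_closure ⟨v, hv, by simp⟩)
  refine le_antisymm (hle s r) ?_
  simpa only [signFlip_signFlip] using hle s (signFlip s r)

lemma exists_signFlip_ne {K : Type*} [CommRing K] [IsDomain K] [CharZero K] {S : Set ℕ}
    {r : ℕ → K × K} {v₂ v₃ : ℕ} (h₂ : v₂ ∈ S) (h₃ : v₃ ∈ S) (hr₂ : (r v₂).2 ≠ 0)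
    (hr₃ : (r v₃).1 ≠ 0) {s s' : ℤˣ × ℤˣ} (hs : s ≠ s') : ∃ v ∈ S, signFlip s r v ≠ signFlip s' r v := by
  by_contra! h
  refine hs (Prod.ext (Units.ext (Int.cast_injective (α := K) ?_))
    (Units.ext (Int.cast_injective (α := K) ?_)))
  · exact mul_right_cancel₀ hr₃ (congrArg Prod.fst (h v₃ h₃))
  · exact mul_right_cancel₀ hr₂ (congrArg Prod.snd (h v₂ h₂))

lemma mul_add_mul_eq_of_sqDist_eq {K : Type*} [Field K] [NeZero (2 : K)] {S : Set ℕ}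
    {q r : ℕ → K × K} {o : ℕ} (ho : o ∈ S) (hq : q o = 0) (hr : r o = 0)
    (h : ∀ u ∈ S, ∀ v ∈ S, sqDist q u v = sqDist r u v) {u v : ℕ} (hu : u ∈ S) (hv : v ∈ S) :
    (q u).1 * (q v).1 + (q u).2 * (q v).2 = (r u).1 * (r v).1 + (r u).2 * (r v).2 := by
  have huv := h u hu v hv
  have huo := h u hu o ho
  have hvo := h v hv o ho
  simp only [sqDist, hq, hr, Prod.fst_zero, Prod.snd_zero, sub_zero] at huv huo hvo
  apply mul_left_cancel₀ (two_ne_zero (α := K))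
  linear_combination huo + hvo - huv

theorem exists_eq_signFlip_of_sqDist_eq {S : Set ℕ} {q r : ℕ → ℂ × ℂ} {v₁ v₂ v₃ : ℕ}
    (h₁ : v₁ ∈ S) (h₂ : v₂ ∈ S) (h₃ : v₃ ∈ S) (hq : StdPos q v₁ v₂) (hr : StdPos r v₁ v₂)
    (hr₂ : (r v₂).2 ≠ 0) (hr₃ : (r v₃).1 ≠ 0)
    (h : ∀ u ∈ S, ∀ v ∈ S, sqDist q u v = sqDist r u v) :
    ∃ s : ℤˣ × ℤˣ, ∀ v ∈ S, q v = signFlip s r v := by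
  obtain ⟨δ, hy⟩ := exists_sign_of_mul_eq_mul (f := fun v => (q v).2) (g := fun v => (r v).2)
      h₂ hr₂ fun u hu => by
    simpa [hq.2, hr.2] using mul_add_mul_eq_of_sqDist_eq h₁ hq.1 hr.1 h hu h₂
  obtain ⟨ε, hx⟩ := exists_sign_of_mul_eq_mul (f := fun v => (q v).1) (g := fun v => (r v).1)
      h₃ hr₃ fun u hu => by
    have hdot := mul_add_mul_eq_of_sqDist_eq h₁ hq.1 hr.1 h hu h₃
    rw [hy u hu, hy v₃ h₃] at hdot
    linear_combination hdot - (r u).2 * (r v₃).2 * Int.cast_units_mul_self (R := ℂ) δ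
  exact ⟨(ε, δ), fun v hv => Prod.ext (hx v hv) (hy v hv)⟩

theorem statement6_general (G : RGraph)
    (v₁ v₂ : ℕ) (hv₁ : v₁ ∈ G.verts) (hv₂ : v₂ ∈ G.verts) (hne : v₁ ≠ v₂)
    (hcard : 3 ≤ G.verts.card)
    (p : ℕ → ℂ × ℂ) (hp : FGeneric G p) :
    ∃ q : Fin 4 → ℕ → ℂ × ℂ,
      (∀ j, FCong G p (q j) ∧ StdPos (q j) v₁ v₂) ∧
      (∀ j k, j ≠ k → ∃ v ∈ G.verts, q j v ≠ q k v) ∧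
      (∀ q' : ℕ → ℂ × ℂ, FCong G p q' → StdPos q' v₁ v₂ →
        ∃ j, ∀ v ∈ G.verts, q j v = q' v) ∧
      (∀ j k, coordField G (q j) = coordField G (q k)) := by
  obtain ⟨v₃, hv₃, h₃₁, h₃₂⟩ := G.verts.exists_mem_ne_ne_of_two_lt_card hcard v₁ v₂
  obtain ⟨w, hw⟩ := IsAlgClosed.exists_pow_nat_eq (sqDist p v₂ v₁) two_pos
  have hw₀ : w ≠ 0 := by
    rintro rfl
    exact hp.sqDist_ne_zero hv₁ hv₂ hne (by rw [← hw, zero_pow two_ne_zero])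
  set r := standardForm p v₁ v₂ w
  have hr : ∀ u v, sqDist r u v = sqDist p u v := sqDist_standardForm hw hw₀
  have hstd : StdPos r v₁ v₂ := ⟨standardForm_self_left, standardForm_fst_right⟩
  have hr₂ : (r v₂).2 ≠ 0 := by rwa [standardForm_snd_right hw hw₀]
  have hr₃ : (r v₃).1 ≠ 0 :=
    div_ne_zero (hp.det_ne_zero hv₁ hv₂ hv₃ hne h₃₁.symm h₃₂.symm) hw₀
  let e : Fin 4 ≃ ℤˣ × ℤˣ := (Fintype.equivFinOfCardEq (α := ℤˣ × ℤˣ) rfl).symm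
  refine ⟨fun j => signFlip (e j) r, fun j => ⟨fun u _ v _ => ?_, signFlip_stdPos hstd _⟩,
    fun j k hjk => exists_signFlip_ne hv₂ hv₃ hr₂ hr₃ (e.injective.ne hjk), fun q' hq' hq'std => ?_,
    fun j k => by rw [coordField_signFlip, coordField_signFlip]⟩
  · rw [sqDist_signFlip, hr]
  · obtain ⟨s, hs⟩ := exists_eq_signFlip_of_sqDist_eq hv₁ hv₂ hv₃ hq'std hstd hr₂ hr₃
      fun u hu v hv => (hq' u hu v hv).symm.trans (hr u v).symm
    exact ⟨e.symm s, fun v hv => by simp [hs v hv]⟩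

/-- Lemma: a generic framework on a graph with at least 3 vertices has exactly four
congruent realisations in standard position, all generating the same field. -/
theorem statement6 (G : RGraph) (hwf : G.WellFormed)
    (v₁ v₂ : ℕ) (hv₁ : v₁ ∈ G.verts) (hv₂ : v₂ ∈ G.verts) (hne : v₁ ≠ v₂)
    (hcard : 3 ≤ G.verts.card)
    (p : ℕ → ℂ × ℂ) (hp : FGeneric G p) :
    ∃ q : Fin 4 → ℕ → ℂ × ℂ,
      (∀ j, FCong G p (q j) ∧ StdPos (q j) v₁ v₂) ∧
      (∀ j k, j ≠ k → ∃ v ∈ G.verts, q j v ≠ q k v) ∧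
      (∀ q' : ℕ → ℂ × ℂ, FCong G p q' → StdPos q' v₁ v₂ →
        ∃ j, ∀ v ∈ G.verts, q j v = q' v) ∧
      (∀ j k, coordField G (q j) = coordField G (q k)) :=
  statement6_general G v₁ v₂ hv₁ hv₂ hne hcard p hp
end
end
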